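/- Let the grid on X, Y be endowed with a unique sink orientation, let i ≥ 1 be an integer, and let u and w be vertices with refined out-degrees (2^{i−1}, 2^{i−1}) and (2^i, 2^i) respectively. Then |Φ(u) ∪ Φ(w)| ≤ 5·2^{i−1}. -/

import Mathlib

open Finset

/-- An assignment of directions to the edges of the grid on `X`, `Y`:
`out u v = true` means the edge between `u` and `v` is directed from `u` to `v`. -/
structure GridOrientation (X Y : Type) where
  out : X × Y → X × Y → Bool

namespace GridOrientation

variable {X Y : Type} [Fintype X] [Fintype Y] [DecidableEq X] [DecidableEq Y]

/-- Two distinct vertices of the grid are adjacent iff they agree in one coordinate. -/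
def Adj (u v : X × Y) : Prop := u ≠ v ∧ (u.1 = v.1 ∨ u.2 = v.2)

/-- `out` is a genuine orientation of the grid: directed edges go along edges of the
grid, and each edge gets exactly one direction. -/
def IsOrientation (o : GridOrientation X Y) : Prop :=
  (∀ u v, o.out u v = true → Adj u v) ∧
  (∀ u v, Adj u v → (o.out u v = true ↔ ¬ o.out v u = true))

/-- `v` is a sink of the face `A × B`. -/
def IsFaceSink (o : GridOrientation X Y) (A : Finset X) (B : Finset Y) (v : X × Y) : Prop :=
  v.1 ∈ A ∧ v.2 ∈ B ∧ ∀ u : X × Y, u.1 ∈ A → u.2 ∈ B → ¬ o.out v u = true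

/-- A unique sink orientation: an orientation such that every nonempty face has a
unique sink. -/
def IsUSO (o : GridOrientation X Y) : Prop :=
  o.IsOrientation ∧
  ∀ (A : Finset X) (B : Finset Y), A.Nonempty → B.Nonempty →
    ∃! v : X × Y, o.IsFaceSink A B v

/-- `Φ_X(v)`. -/
def phiX (o : GridOrientation X Y) (v : X × Y) : Finset X :=
  Finset.univ.filter fun x => o.out v (x, v.2) = true

/-- `Φ_Y(v)`. -/
def phiY (o : GridOrientation X Y) (v : X × Y) : Finset Y :=
  Finset.univ.filter fun y => o.out v (v.1, y) = true

/-- `Φ(v) = Φ_X(v) ∪ Φ_Y(v) ⊆ X ⊔ Y`. -/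
def phi (o : GridOrientation X Y) (v : X × Y) : Finset (X ⊕ Y) :=
  (o.phiX v).disjSum (o.phiY v)

/-- `u →⁺ v`: there is a nonempty directed path from `u` to `v`. -/
def Reaches (o : GridOrientation X Y) (u v : X × Y) : Prop :=
  Relation.TransGen (fun a b => o.out a b = true) u v

/-- A (global) sink: a vertex with no outgoing edge. -/
def IsSink (o : GridOrientation X Y) (v : X × Y) : Prop :=
  ∀ u : X × Y, ¬ o.out v u = true

/-- The out-neighbor `v⟨h⟩` of `v` determined by the pivot `h ∈ X ⊔ Y`. -/
def pivotStep (v : X × Y) : X ⊕ Y → X × Y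
  | Sum.inl x => (x, v.2)
  | Sum.inr y => (v.1, y)

/-- `f` is the expected-hitting-time function of the set `W`: it vanishes on `W` and
satisfies the one-step recurrence off `W`. -/
def IsHittingTimeFun (o : GridOrientation X Y) (W : Set (X × Y)) (f : X × Y → ℝ) : Prop :=
  (∀ v ∈ W, f v = 0) ∧
  ∀ v ∉ W, f v = 1 + (1 / ((o.phi v).card : ℝ)) *
      ∑ u : X × Y, (if o.out v u then f u else 0)

/-- `w` is the `i`-th milestone vertex: for `i = 0` the global sink, for `i ≥ 1` the
vertex of refined out-degree `(2^(i-1), 2^(i-1))`. -/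
def IsMilestone (o : GridOrientation X Y) (i : ℕ) (w : X × Y) : Prop :=
  if i = 0 then o.IsSink w
  else (o.phiX w).card = 2 ^ (i - 1) ∧ (o.phiY w).card = 2 ^ (i - 1)

/-- The milestone set `W^i` associated with the `i`-th milestone vertex `w`. -/
def milestoneSet (o : GridOrientation X Y) (i : ℕ) (w : X × Y) : Set (X × Y) :=
  if i = 0 then {w} else {v | o.Reaches w v}

end GridOrientation

/-- `L = 1 + ⌊log₂ min (|X|-1) (|Y|-1)⌋`, the number of milestones. -/
def gridL (X Y : Type) [Fintype X] [Fintype Y] : ℕ :=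
  1 + Nat.log 2 (min (Fintype.card X - 1) (Fintype.card Y - 1))

/-- The `n`-th harmonic number, as a real number. -/
noncomputable def harmonicR (n : ℕ) : ℝ := ∑ k ∈ Finset.range n, 1 / (k + 1)

/-! In a unique sink orientation of the grid every row and every column is a linear order (edges
point downwards), `Φ_X(v)` is the set of elements below `v` in its row, and every `2 × 2` face is
combed: when its rows order the two `x`'s oppositely, its columns order the two `y`'s alike.

Suppose both `Φ_X(u), Φ_X(w)` and `Φ_Y(u), Φ_Y(w)` were not nested. The crossing witnesses in `X`
are ordered oppositely by the rows of `u` and `w`, so combing forces the columns of `u`, `w` and of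
both witnesses to order those two rows alike; symmetrically for the rows. Up to swapping `u` and
`w` and reversing all rows this leaves one configuration, which four more `2 × 2` faces rule out.
Hence one of the two pairs of out-sets is nested, and
`|Φ(u) ∪ Φ(w)| ≤ 2^i + (2^(i-1) + 2^i) = 5 · 2^(i-1)`. -/

open Function

theorem rel_of_not_rel_of_ne {α : Type*} {r : α → α → Prop} [Std.Trichotomous r] {a b : α}
    (h : ¬r a b) (hne : a ≠ b) : r b a :=
  ((trichotomous_of r a b).resolve_left h).resolve_left hne

theorem iff_swap_of_ne {α β : Type*} {r : β → α → α → Prop} [∀ x, IsStrictTotalOrder α (r x)]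
    {x x' : β} {b d : α} (hbd : b ≠ d) : (r x d b ↔ r x' d b) ↔ (r x b d ↔ r x' b d) := by
  have hr (z : β) : r z d b ↔ ¬r z b d := ⟨asymm, fun h => rel_of_not_rel_of_ne h hbd⟩
  rw [hr, hr, not_iff_not]

section Combed

variable {X Y : Type*}

/-- `R y` orders the row `y` and `C x` the column `x`. The `2 × 2` face on `{p, q} × {r, s}` is
combed if its two rows order `p, q` alike or its two columns order `r, s` alike. -/
def IsCombed (R : Y → X → X → Prop) (C : X → Y → Y → Prop) : Prop :=
  ∀ ⦃p q : X⦄ ⦃r s : Y⦄, R r p q → R s q p → (C p r s ↔ C q r s)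

variable {R : Y → X → X → Prop} {C : X → Y → Y → Prop}

theorem IsCombed.swap_rows (h : IsCombed R C) : IsCombed (fun y => swap (R y)) C :=
  fun _ _ _ _ hr hs => (h hr hs).symm

variable [∀ y, IsStrictTotalOrder X (R y)]

/-- `a` lies between `x₁` and `x₂` in row `b`, which row `d` orders oppositely, so `a` forms an
inversion of the two rows with `x₁` or with `x₂`. -/
theorem IsCombed.col_iff_of_between (h : IsCombed R C) {a x₁ x₂ : X} {b d : Y}
    (h₁ : R b x₁ a) (h₂ : ¬R b x₂ a) (h₃ : R d x₂ x₁) : C a b d ↔ C x₁ b d := by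
  have h₁₂ : C x₁ b d ↔ C x₂ b d := h (trans_trichotomous_right h₁ h₂) h₃
  rcases trichotomous_of (R d) a x₁ with had | rfl | hda
  · exact (h h₁ had).symm
  · exact absurd h₁ (irrefl _)
  · have hd : R d x₂ a := _root_.trans h₃ hda
    exact (h (rel_of_not_rel_of_ne h₂ (ne_of_irrefl hd)) hd).trans h₁₂.symm

variable [∀ x, IsStrictTotalOrder Y (C x)]

theorem IsCombed.transpose (h : IsCombed R C) : IsCombed C R := by
  intro p q r s hr hs
  by_cases hp : R p r s <;> by_cases hq : R q r s
  · exact iff_of_true hp hq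
  · have hqsr := rel_of_not_rel_of_ne hq (ne_of_irrefl hp)
    exact absurd ((h hp hqsr).mp hr) (asymm hs)
  · have hpsr := rel_of_not_rel_of_ne hp (ne_of_irrefl hq)
    exact absurd ((h hpsr hq).mpr hr) (asymm hs)
  · exact iff_of_false hp hq

theorem IsCombed.col_iff_of_crossing (h : IsCombed R C) {a c x₁ x₂ : X} {b d : Y}
    (hx₁ : R b x₁ a) (hx₁' : ¬R d x₁ c) (hx₂ : R d x₂ c) (hx₂' : ¬R b x₂ a) :
    (C x₁ b d ↔ C a b d) ∧ (C x₂ b d ↔ C a b d) ∧ (C c b d ↔ C a b d) := by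
  have h₁₂ : R b x₁ x₂ := trans_trichotomous_right hx₁ hx₂'
  have h₂₁ : R d x₂ x₁ := trans_trichotomous_right hx₂ hx₁'
  have hbd : b ≠ d := fun e => asymm h₁₂ (e ▸ h₂₁)
  have ha := (h.col_iff_of_between hx₁ hx₂' h₂₁).symm
  have hc := (iff_swap_of_ne hbd).mp (h.col_iff_of_between hx₂ hx₁' h₁₂)
  have h₂ := (h h₁₂ h₂₁).symm.trans ha
  exact ⟨ha, h₂, hc.trans h₂⟩

/-- The forbidden configuration: in the face `{a, c} × {b, d}` the rows put `a` below `c` and the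
columns put `b` below `d`, while `p` jumps from below `a` in row `b` to above `c` in row `d`, and
`y` from below `b` in column `a` to above `d` in column `c`. -/
theorem IsCombed.false_of_jumps (h : IsCombed R C) {p a c : X} {b d y : Y}
    (hpa : R b p a) (hac : R b a c) (hac' : R d a c) (hcp : R d c p)
    (hyb : C a y b) (hbd : C a b d) (hbd' : C c b d) (hdy : C c d y)
    (hac'' : R y a c) (hbd'' : C p b d) : False := by
  have hpc : R b p c := _root_.trans hpa hac
  have hap : R d a p := _root_.trans hac' hcp
  rcases trichotomous_of (R y) a p with hyap | rfl | hypa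
  · have hpyb : C p y b := rel_of_not_rel_of_ne
      (fun hb => asymm hyb ((h hpa hyap).mp hb)) (ne_of_irrefl' hyb)
    rcases trichotomous_of (R y) c p with hycp | rfl | hypc
    · exact asymm hpyb ((h hpc hycp).mpr (_root_.trans hbd' hdy))
    · exact irrefl _ hcp
    · exact asymm ((h hcp hypc).mp hdy) (_root_.trans hpyb hbd'')
  · exact irrefl _ hpa
  · have hpdy : C p d y := (h hcp (_root_.trans hypa hac'')).mp hdy
    exact asymm ((h hap hypa).mpr hpdy) (_root_.trans hyb hbd)

theorem IsCombed.not_crossing_of_col (h : IsCombed R C) {a c x₁ x₂ : X} {b d y₁ y₂ : Y}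
    (hx₁ : R b x₁ a) (hx₁' : ¬R d x₁ c) (hx₂ : R d x₂ c) (hx₂' : ¬R b x₂ a)
    (hy₁ : C a y₁ b) (hy₁' : ¬C c y₁ d) (hy₂ : C c y₂ d) (hy₂' : ¬C a y₂ b)
    (hσ : C a b d) : False := by
  obtain ⟨hσ₁, hσ₂, hσc⟩ := h.col_iff_of_crossing hx₁ hx₁' hx₂ hx₂'
  obtain ⟨hτ₁, -, hτd⟩ := h.transpose.col_iff_of_crossing hy₁ hy₁' hy₂ hy₂'
  have hdy₁ : C c d y₁ := rel_of_not_rel_of_ne hy₁' (ne_of_irrefl (_root_.trans hy₁ hσ))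
  rcases trichotomous_of (R b) a c with hτ | rfl | hτ
  · refine h.false_of_jumps hx₁ hτ (hτd.mpr hτ) ?_ hy₁ hσ (hσc.mpr hσ) hdy₁ (hτ₁.mpr hτ)
      (hσ₁.mpr hσ)
    exact rel_of_not_rel_of_ne hx₁' (ne_of_irrefl (_root_.trans hx₁ hτ))
  · exact hy₁' (_root_.trans hy₁ hσ)
  · have hac : a ≠ c := ne_of_irrefl' hτ
    have hτd' : R d c a := ((iff_swap_of_ne hac).mpr hτd).mpr hτ
    refine h.swap_rows.false_of_jumps (p := x₂) ?_ hτ hτd' hx₂ hy₁ hσ (hσc.mpr hσ) hdy₁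
      (((iff_swap_of_ne hac).mpr hτ₁).mpr hτ) (hσ₂.mpr hσ)
    exact rel_of_not_rel_of_ne hx₂' (ne_of_irrefl' (_root_.trans hx₂ hτd'))

theorem IsCombed.not_crossing (h : IsCombed R C) {a c x₁ x₂ : X} {b d y₁ y₂ : Y}
    (hx₁ : R b x₁ a) (hx₁' : ¬R d x₁ c) (hx₂ : R d x₂ c) (hx₂' : ¬R b x₂ a)
    (hy₁ : C a y₁ b) (hy₁' : ¬C c y₁ d) (hy₂ : C c y₂ d) (hy₂' : ¬C a y₂ b) : False := by
  obtain ⟨-, -, hσc⟩ := h.col_iff_of_crossing hx₁ hx₁' hx₂ hx₂'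
  rcases trichotomous_of (C a) b d with hσ | rfl | hσ
  · exact h.not_crossing_of_col hx₁ hx₁' hx₂ hx₂' hy₁ hy₁' hy₂ hy₂' hσ
  · exact asymm (trans_trichotomous_right hx₁ hx₂') (trans_trichotomous_right hx₂ hx₁')
  · refine h.not_crossing_of_col hx₂ hx₂' hx₁ hx₁' hy₂ hy₂' hy₁ hy₁' ?_
    exact ((iff_swap_of_ne (ne_of_irrefl' hσ)).mpr hσc).mpr hσ

end Combed

namespace GridOrientation

variable {X Y : Type}

/-- Edges point downwards: `p` lies below `q` in row `y`. -/
def rowLt (o : GridOrientation X Y) (y : Y) (p q : X) : Prop := o.out (q, y) (p, y) = true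

def colLt (o : GridOrientation X Y) (x : X) (p q : Y) : Prop := o.out (x, q) (x, p) = true

def transpose (o : GridOrientation X Y) : GridOrientation Y X := ⟨fun u v => o.out u.swap v.swap⟩

theorem adj_swap {u v : X × Y} : Adj u.swap v.swap ↔ Adj u v := by
  simp only [Adj, ne_eq, Prod.swap_inj, Prod.fst_swap, Prod.snd_swap, or_comm]

variable {o : GridOrientation X Y}

theorem IsOrientation.not_out_self (h : o.IsOrientation) (v : X × Y) : ¬o.out v v = true :=
  fun hv => (h.1 v v hv).1 rfl

theorem IsOrientation.not_out_of_out (h : o.IsOrientation) {u v : X × Y} (huv : o.out u v = true) :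
    ¬o.out v u = true :=
  (h.2 u v (h.1 u v huv)).mp huv

theorem IsOrientation.isFaceSink_pair [DecidableEq X] [DecidableEq Y] (h : o.IsOrientation)
    {p q : X} {r s : Y} (hq : ¬o.out (p, r) (q, r) = true) (hs : ¬o.out (p, r) (p, s) = true) :
    o.IsFaceSink {p, q} {r, s} (p, r) := by
  refine ⟨by simp, by simp, ?_⟩
  rintro ⟨x, y⟩ hx hy hout
  simp only [mem_insert, mem_singleton] at hx hy
  rcases hx with hx | hx <;> rcases hy with hy | hy <;> rw [hx, hy] at hout
  · exact h.not_out_self _ hout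
  · exact hs hout
  · exact hq hout
  · rcases (h.1 _ _ hout).2 with e | e <;> dsimp only at e <;> rw [← e] at hout
    · exact hs hout
    · exact hq hout

theorem IsUSO.not_forall_exists_out (h : o.IsUSO) {A : Finset X} {B : Finset Y}
    (hA : A.Nonempty) (hB : B.Nonempty) :
    ¬∀ v : X × Y, v.1 ∈ A → v.2 ∈ B → ∃ u : X × Y, u.1 ∈ A ∧ u.2 ∈ B ∧ o.out v u = true := by
  intro hall
  obtain ⟨v, ⟨hvA, hvB, hv⟩, -⟩ := h.2 A B hA hB
  obtain ⟨u, huA, huB, hu⟩ := hall v hvA hvB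
  exact hv u huA huB hu

theorem IsUSO.transpose (h : o.IsUSO) : o.transpose.IsUSO := by
  refine ⟨⟨fun u v huv => adj_swap.mp (h.1.1 _ _ huv), fun u v huv => h.1.2 _ _ (adj_swap.mpr huv)⟩,
    fun A B hA hB => ?_⟩
  obtain ⟨v, ⟨hvB, hvA, hv⟩, huniq⟩ := h.2 B A hB hA
  refine ⟨v.swap, ⟨hvA, hvB, fun u hu₁ hu₂ => hv u.swap hu₂ hu₁⟩, fun u ⟨hu₁, hu₂, hu⟩ => ?_⟩
  rw [← huniq u.swap ⟨hu₂, hu₁, fun z hz₁ hz₂ => hu z.swap hz₂ hz₁⟩, Prod.swap_swap]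

theorem IsUSO.isStrictTotalOrder_rowLt (h : o.IsUSO) (y : Y) :
    IsStrictTotalOrder X (o.rowLt y) where
  trichotomous p q hpq hqp := by
    by_contra hne
    exact hpq ((h.1.2 (q, y) (p, y) ⟨by simpa using Ne.symm hne, Or.inr rfl⟩).mpr hqp)
  irrefl p := h.1.not_out_self _
  trans p q r hpq hqr := by
    classical
    by_contra hpr
    have hne : p ≠ r := by
      rintro rfl
      exact h.1.not_out_of_out hpq hqr
    have hrp : o.out (p, y) (r, y) = true :=
      (h.1.2 (p, y) (r, y) ⟨by simpa using hne, Or.inr rfl⟩).mpr hpr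
    refine h.not_forall_exists_out (A := {p, q, r}) (B := {y}) ⟨p, by simp⟩ ⟨y, by simp⟩ ?_
    rintro ⟨x, y'⟩ hx hy
    simp only [mem_insert, mem_singleton] at hx hy
    rcases hx with hx | hx | hx <;> rw [hx, hy]
    · exact ⟨(r, y), by simp, by simp, hrp⟩
    · exact ⟨(p, y), by simp, by simp, hpq⟩
    · exact ⟨(q, y), by simp, by simp, hqr⟩

theorem IsUSO.isStrictTotalOrder_colLt (h : o.IsUSO) (x : X) : IsStrictTotalOrder Y (o.colLt x) :=
  h.transpose.isStrictTotalOrder_rowLt x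

/-- A `2 × 2` face of a unique sink orientation has neither two sinks nor a directed 4-cycle. -/
theorem IsUSO.isCombed (h : o.IsUSO) : IsCombed o.rowLt o.colLt := by
  classical
  intro p q r s hr hs
  have hpq : p ≠ q := by
    rintro rfl
    exact h.1.not_out_self _ hr
  constructor
  · intro hp
    by_contra hq
    have hpr := h.1.isFaceSink_pair (h.1.not_out_of_out hr) (h.1.not_out_of_out hp)
    have hqs : o.IsFaceSink {q, p} {s, r} (q, s) := h.1.isFaceSink_pair (h.1.not_out_of_out hs) hq
    rw [pair_comm q, pair_comm s] at hqs
    obtain ⟨v, -, huniq⟩ := h.2 {p, q} {r, s} ⟨p, by simp⟩ ⟨r, by simp⟩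
    exact hpq (Prod.ext_iff.mp ((huniq _ hpr).trans (huniq _ hqs).symm)).1
  · intro hq
    by_contra hp
    have hrs : r ≠ s := by
      rintro rfl
      exact h.1.not_out_self _ hq
    have hp' : o.out (p, r) (p, s) = true :=
      (h.1.2 (p, r) (p, s) ⟨by simpa using hrs, Or.inl rfl⟩).mpr hp
    refine h.not_forall_exists_out (A := {p, q}) (B := {r, s}) ⟨p, by simp⟩ ⟨r, by simp⟩ ?_
    rintro ⟨x, y⟩ hx hy
    simp only [mem_insert, mem_singleton] at hx hy
    rcases hx with hx | hx <;> rcases hy with hy | hy <;> rw [hx, hy]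
    · exact ⟨(p, s), by simp, by simp, hp'⟩
    · exact ⟨(q, s), by simp, by simp, hs⟩
    · exact ⟨(p, r), by simp, by simp, hr⟩
    · exact ⟨(q, r), by simp, by simp, hq⟩

theorem mem_phiX [Fintype X] {v : X × Y} {x : X} : x ∈ o.phiX v ↔ o.rowLt v.2 x v.1 := by
  simp [phiX, rowLt]

theorem mem_phiY [Fintype Y] {v : X × Y} {y : Y} : y ∈ o.phiY v ↔ o.colLt v.1 y v.2 := by
  simp [phiY, colLt]

theorem IsUSO.phiX_nested_or_phiY_nested [Fintype X] [Fintype Y] (h : o.IsUSO) (u w : X × Y) :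
    (o.phiX u ⊆ o.phiX w ∨ o.phiX w ⊆ o.phiX u) ∨ (o.phiY u ⊆ o.phiY w ∨ o.phiY w ⊆ o.phiY u) := by
  have := h.isStrictTotalOrder_rowLt
  have := h.isStrictTotalOrder_colLt
  by_contra hcross
  simp only [not_or, not_subset] at hcross
  obtain ⟨⟨⟨x₁, hx₁, hx₁'⟩, ⟨x₂, hx₂, hx₂'⟩⟩, ⟨y₁, hy₁, hy₁'⟩, ⟨y₂, hy₂, hy₂'⟩⟩ := hcross
  rw [mem_phiX] at hx₁ hx₁' hx₂ hx₂'
  rw [mem_phiY] at hy₁ hy₁' hy₂ hy₂'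
  exact h.isCombed.not_crossing hx₁ hx₁' hx₂ hx₂' hy₁ hy₁' hy₂ hy₂'

theorem card_phi_union [Fintype X] [Fintype Y] [DecidableEq X] [DecidableEq Y] (u w : X × Y) :
    #(o.phi u ∪ o.phi w) = #(o.phiX u ∪ o.phiX w) + #(o.phiY u ∪ o.phiY w) := by
  rw [← card_disjSum]
  congr 1
  ext (x | y) <;> simp [phi]

end GridOrientation

theorem Finset.card_union_eq_max_of_subset_or {α : Type*} [DecidableEq α] {s t : Finset α}
    (h : s ⊆ t ∨ t ⊆ s) : #(s ∪ t) = max #s #t := by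
  rcases h with h | h
  · rw [union_eq_right.mpr h, max_eq_right (card_le_card h)]
  · rw [union_eq_left.mpr h, max_eq_left (card_le_card h)]

theorem card_union_outmaps_le_general
    {X Y : Type} [Fintype X] [Fintype Y] [DecidableEq X] [DecidableEq Y]
    (o : GridOrientation X Y) (huso : o.IsUSO)
    (i : ℕ) (u w : X × Y)
    (hu : (o.phiX u).card = 2 ^ (i - 1) ∧ (o.phiY u).card = 2 ^ (i - 1))
    (hw : (o.phiX w).card = 2 ^ i ∧ (o.phiY w).card = 2 ^ i) :
    (o.phi u ∪ o.phi w).card ≤ 5 * 2 ^ (i - 1) := by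
  have hpow : 2 ^ i ≤ 2 * 2 ^ (i - 1) := by
    rw [← pow_succ']
    exact Nat.pow_le_pow_right two_pos (by omega)
  have hX := card_union_le (o.phiX u) (o.phiX w)
  have hY := card_union_le (o.phiY u) (o.phiY w)
  rw [GridOrientation.card_phi_union]
  rcases huso.phiX_nested_or_phiY_nested u w with hnest | hnest <;>
  · have := card_union_eq_max_of_subset_or hnest
    omega

/-- In a grid USO, if `u` has refined out-degree
`(2^(i-1), 2^(i-1))` and `w` has refined out-degree `(2^i, 2^i)` (with `i ≥ 1`),
then `|Φ(u) ∪ Φ(w)| ≤ 5 · 2^(i-1)`. -/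
theorem card_union_outmaps_le
    {X Y : Type} [Fintype X] [Fintype Y] [DecidableEq X] [DecidableEq Y]
    (hX : 2 ≤ Fintype.card X) (hY : 2 ≤ Fintype.card Y)
    (o : GridOrientation X Y) (huso : o.IsUSO)
    (i : ℕ) (hi : 1 ≤ i) (u w : X × Y)
    (hu : (o.phiX u).card = 2 ^ (i - 1) ∧ (o.phiY u).card = 2 ^ (i - 1))
    (hw : (o.phiX w).card = 2 ^ i ∧ (o.phiY w).card = 2 ^ i) :
    (o.phi u ∪ o.phi w).card ≤ 5 * 2 ^ (i - 1) :=
  card_union_outmaps_le_general o huso i u w hu hw
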